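/- Let G be the group presented with two generators p, γ and the relations p⁹ = 1 and γ⁻¹pγ = p⁴. Then the commutator subgroup [G,G] is contained in the center of G and has order 3. -/

import Mathlib

/-
Conjugation by `γ` raises `p` to the fourth power, hence fixes `p³` (as `p¹² = p³`), so `p³` is
central; and the defining relation reads `⁅γ⁻¹, p⁆ = p³`. Modulo the central subgroup `⟨p³⟩` the
two generators commute, so `[G, G] = ⟨p³⟩`. This has order exactly 3: `p⁹ = 1`, while `p³ ≠ 1`
because `p ↦ (x ↦ x + 1)`, `γ ↦ (x ↦ 7x)` defines an action of `G` on `ZMod 9`.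
-/

namespace ClassicalZariski.Stmt6

/-- `p` in the free group on the two generators `p, γ`. -/
def p : FreeGroup (Fin 2) := FreeGroup.of 0

/-- `γ` in the free group on the two generators. -/
def g : FreeGroup (Fin 2) := FreeGroup.of 1

/-- The relations `p⁹ = 1` and `γ⁻¹ p γ = p⁴`. -/
def rels : Set (FreeGroup (Fin 2)) :=
  { p ^ 9, (g⁻¹ * p * g) * (p ^ 4)⁻¹ }

/-- The group `G` presented by generators `p, γ` and relations `p⁹ = 1`, `γ⁻¹ p γ = p⁴`. -/
def G : Type := PresentedGroup rels

instance : Group G := by unfold G; infer_instance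

end ClassicalZariski.Stmt6

theorem commute_of_inv_mul_mul_eq {G : Type*} [Group G] {a b : G} (h : a⁻¹ * b * a = b) :
    Commute a b :=
  (inv_mul_eq_iff_eq_mul.mp (by rwa [mul_assoc] at h)).symm

namespace Subgroup

variable {G : Type*} [Group G]

theorem mem_center_of_commute_of_closure_pair_eq_top {a b z : G}
    (h : closure {a, b} = ⊤) (ha : Commute a z) (hb : Commute b z) : z ∈ center G := by
  rw [center_eq_iInf h]
  simp only [Set.mem_insert_iff, Set.mem_singleton_iff, mem_iInf, mem_centralizer_singleton_iff]
  rintro g (rfl | rfl)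
  exacts [ha.eq.symm, hb.eq.symm]

theorem normal_of_le_center {H : Subgroup G} (h : H ≤ center G) : H.Normal :=
  ⟨fun n hn g ↦ by rwa [mem_center_iff.mp (h hn) g, mul_inv_cancel_right]⟩

theorem commutator_le_of_commute_mk_of_closure_pair_eq_top {a b : G} (h : closure {a, b} = ⊤)
    {N : Subgroup G} [N.Normal] (hab : Commute (a : G ⧸ N) b) : _root_.commutator G ≤ N := by
  refine Normal.quotient_commutative_iff_commutator_le.mp ?_
  have hQ : closure {(a : G ⧸ N), (b : G ⧸ N)} = ⊤ := by
    have := MonoidHom.map_closure (QuotientGroup.mk' N) {a, b}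
    rwa [h, ← MonoidHom.range_eq_map, MonoidHom.range_eq_top.2 (QuotientGroup.mk'_surjective N),
      Set.image_pair, eq_comm] at this
  rw [← center_eq_top_iff, eq_top_iff, ← hQ, closure_le, Set.insert_subset_iff,
    Set.singleton_subset_iff]
  exact ⟨mem_center_of_commute_of_closure_pair_eq_top hQ (.refl _) hab.symm,
    mem_center_of_commute_of_closure_pair_eq_top hQ hab (.refl _)⟩

end Subgroup

namespace ClassicalZariski.Stmt6

open Subgroup
open scoped commutatorElement

def P : G := PresentedGroup.of 0

def Γ : G := PresentedGroup.of 1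

theorem closure_P_Γ_eq_top : closure {P, Γ} = ⊤ :=
  eq_top_iff.2 fun x _ ↦ PresentedGroup.generated_by rels (closure {P, Γ}) (fun j ↦ by
    fin_cases j
    exacts [subset_closure (Set.mem_insert P _), subset_closure (Set.mem_insert_of_mem P rfl)]) x

theorem P_pow_nine : P ^ 9 = 1 :=
  (map_pow (PresentedGroup.mk rels) p 9).symm.trans
    (PresentedGroup.one_of_mem (Set.mem_insert _ _))

theorem inv_Γ_mul_P_mul_Γ : Γ⁻¹ * P * Γ = P ^ 4 := by
  have := PresentedGroup.mk_eq_mk_of_mul_inv_mem (rels := rels) (Set.mem_insert_of_mem _ rfl)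
  rwa [map_mul, map_mul, map_inv, map_pow] at this

theorem commute_Γ_P_pow_three : Commute Γ (P ^ 3) := by
  refine commute_of_inv_mul_mul_eq ?_
  calc Γ⁻¹ * P ^ 3 * Γ = (Γ⁻¹ * P * Γ) ^ 3 := by
        simpa only [inv_inv] using (conj_pow (a := Γ⁻¹) (b := P) (i := 3)).symm
    _ = P ^ 9 * P ^ 3 := by rw [inv_Γ_mul_P_mul_Γ, ← pow_mul, ← pow_add]
    _ = P ^ 3 := by rw [P_pow_nine, one_mul]

theorem P_pow_three_mem_center : P ^ 3 ∈ center G :=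
  mem_center_of_commute_of_closure_pair_eq_top closure_P_Γ_eq_top (Commute.self_pow P 3)
    commute_Γ_P_pow_three

theorem P_pow_three_eq_commutatorElement : P ^ 3 = ⁅Γ⁻¹, P⁆ := by
  rw [commutatorElement_def, inv_inv, inv_Γ_mul_P_mul_Γ]
  group

theorem commutator_eq_zpowers_P_pow_three : commutator G = zpowers (P ^ 3) := by
  refine le_antisymm ?_ (zpowers_le.2 ?_)
  · have := normal_of_le_center (zpowers_le.2 P_pow_three_mem_center)
    refine commutator_le_of_commute_mk_of_closure_pair_eq_top closure_P_Γ_eq_top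
      (commute_of_inv_mul_mul_eq ?_).symm
    have hP3 : ((P ^ 3 : G) : G ⧸ zpowers (P ^ 3)) = 1 :=
      (QuotientGroup.eq_one_iff _).2 (mem_zpowers _)
    rw [← QuotientGroup.mk_inv, ← QuotientGroup.mk_mul, ← QuotientGroup.mk_mul,
      inv_Γ_mul_P_mul_Γ, (pow_succ' P 3 : P ^ 4 = P * P ^ 3), QuotientGroup.mk_mul, hP3, mul_one]
  · rw [P_pow_three_eq_commutatorElement]
    exact commutator_mem_commutator (mem_top _) (mem_top _)

-- Multiplication by `7 = 4⁻¹` in `ZMod 9`, so that conjugating `x ↦ x + 1` by it gives `x ↦ x + 4`.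
def mulSeven : Equiv.Perm (ZMod 9) := ⟨(7 * ·), (4 * ·), by decide, by decide⟩

def toPerm : G →* Equiv.Perm (ZMod 9) :=
  PresentedGroup.toGroup (f := ![Equiv.addRight 1, mulSeven]) (by
    rintro _ (rfl | rfl) <;>
      simp only [p, g, map_mul, map_inv, map_pow, FreeGroup.lift_apply_of, Matrix.cons_val_zero,
        Matrix.cons_val_one, Matrix.cons_val_fin_one] <;>
      decide)

theorem P_pow_three_ne_one : P ^ 3 ≠ 1 :=
  ne_of_apply_ne toPerm (by rw [map_pow, map_one]; decide)

theorem orderOf_P_pow_three : orderOf (P ^ 3) = 3 :=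
  orderOf_eq_prime (by rw [← pow_mul]; exact P_pow_nine) P_pow_three_ne_one

theorem commutator_central_of_order_three :
    commutator G ≤ Subgroup.center G ∧ Nat.card (commutator G) = 3 := by
  rw [commutator_eq_zpowers_P_pow_three]
  exact ⟨zpowers_le.2 P_pow_three_mem_center, by rw [Nat.card_zpowers, orderOf_P_pow_three]⟩

end ClassicalZariski.Stmt6
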